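/- Suppose the RFIM on Λ_n = [-n,n]^d ∩ Z^d with i.i.d. external field satisfies SSM(C) for some C > 0. For a constant C_* > 0, call a vertex v ∈ Λ_n^{(R)} = Λ_n ∩ R·Z^d Good if for every w in the ℓ∞-ball B_R(v) around v and all integers ℓ, r with (log R)² ≤ ℓ ≤ 2r ≤ R/4, max over boxes B ∈ { B_r(w) + a : a ∈ {−r+1,…,r−1}^d }, over z ∈ ∂B with d(w,z) = ℓ, and over ξ ∈ {−1,+1}^{∂B∖{z}} of d_TV( μ_B^{ξ+}(σ_w ∈ ·), μ_B^{ξ−}(σ_w ∈ ·) ) is at most e^{−ℓ/C_*}; otherwise call v Bad. Then there exist constants C_*(d,C) and R_0(d,C) such that for all R ≥ R_0 and every v ∈ Λ_n^{(R)}, P_h( v is Bad ) ≤ R^{−5}. -/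

import Mathlib

open scoped BigOperators
open MeasureTheory ProbabilityTheory

noncomputable section
open scoped Classical

namespace RFIM

/-- A site of the lattice `ℤ^d`. -/
abbrev Site (d : ℕ) := Fin d → ℤ

/-- ℓ∞ distance on `ℤ^d`. -/
def distInf {d : ℕ} (x y : Site d) : ℕ :=
  Finset.univ.sup fun i => (x i - y i).natAbs

/-- Nearest-neighbour adjacency on `ℤ^d` (ℓ¹ distance one). -/
def Adj {d : ℕ} (x y : Site d) : Prop := (∑ i, (x i - y i).natAbs) = 1

/-- Closed ℓ∞ ball of radius `r` about `o`, as a finite set of sites. -/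
def ball {d : ℕ} (o : Site d) (r : ℕ) : Finset (Site d) :=
  Fintype.piFinset fun i => Finset.Icc (o i - (r : ℤ)) (o i + (r : ℤ))

/-- The box `Λ_n = [-n,n]^d ∩ ℤ^d`. -/
def box (d n : ℕ) : Finset (Site d) := ball (fun _ => 0) n

/-- Exterior vertex boundary of `A` inside `Λ`. -/
def bdryIn {d : ℕ} (Λ A : Finset (Site d)) : Finset (Site d) :=
  (Λ \ A).filter fun v => ∃ u ∈ A, Adj u v

/-- Exterior vertex boundary of `A` in all of `ℤ^d`. -/
def bdry {d : ℕ} (A : Finset (Site d)) : Finset (Site d) :=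
  (A.biUnion fun u => ball u 1).filter fun v => v ∉ A ∧ ∃ u ∈ A, Adj u v

/-- Ising configurations on a finite set of sites. -/
abbrev Conf {d : ℕ} (A : Finset (Site d)) := ↥A → Bool

/-- The spin value (±1) of a Boolean. -/
def spin (b : Bool) : ℝ := if b then 1 else -1

/-- Energy (negated Hamiltonian) of the RFIM on `A` at inverse temperature `β`, external
field `h`, with boundary condition `τ` on the set `bd`. -/
def energy {d : ℕ} (β : ℝ) (h : Site d → ℝ) (A bd : Finset (Site d)) (τ : Site d → Bool)
    (σ : Conf A) : ℝ :=
  β / 2 * ∑ u : A, ∑ v : A, (if Adj u.1 v.1 then spin (σ u) * spin (σ v) else 0)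
    + β * ∑ u : A, ∑ v ∈ bd, (if Adj u.1 v then spin (σ u) * spin (τ v) else 0)
    + ∑ u : A, h u.1 * spin (σ u)

/-- The RFIM Gibbs measure on `A` with boundary condition `τ` on `bd`, as a density. -/
def gibbs {d : ℕ} (β : ℝ) (h : Site d → ℝ) (A bd : Finset (Site d)) (τ : Site d → Bool) :
    Conf A → ℝ :=
  fun σ => Real.exp (energy β h A bd τ σ) / ∑ σ' : Conf A, Real.exp (energy β h A bd τ σ')

/-- The RFIM measure on `A` with free boundary condition. -/
def gibbsFree {d : ℕ} (β : ℝ) (h : Site d → ℝ) (A : Finset (Site d)) : Conf A → ℝ :=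
  gibbs β h A ∅ fun _ => true

/-- Probability that the spin at `o` equals `+1` under the density `p`. -/
def probPlusAt {d : ℕ} {A : Finset (Site d)} (p : Conf A → ℝ) (o : Site d) : ℝ :=
  if ho : o ∈ A then ∑ σ : Conf A, (if σ ⟨o, ho⟩ = true then p σ else 0) else 0

/-- Total variation distance between the single-site marginals at `o` of `p` and `q`. -/
def tvAt {d : ℕ} {A : Finset (Site d)} (p q : Conf A → ℝ) (o : Site d) : ℝ :=
  |probPlusAt p o - probPlusAt q o|

/-- Total variation distance between two densities on a finite space. -/
def tvDist {X : Type*} [Fintype X] (p q : X → ℝ) : ℝ := 1 / 2 * ∑ x, |p x - q x|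

/-- Mean of `φ` under the density `p`. -/
def expectVal {X : Type*} [Fintype X] (p φ : X → ℝ) : ℝ := ∑ x, p x * φ x

/-- Variance of `φ` under the density `p`. -/
def varOf {X : Type*} [Fintype X] (p φ : X → ℝ) : ℝ :=
  expectVal p (fun x => φ x ^ 2) - expectVal p φ ^ 2

/-- Squared oscillation of `φ`. -/
def osc {X : Type*} [Fintype X] [Nonempty X] (φ : X → ℝ) : ℝ :=
  ((⨆ x, φ x) - ⨅ x, φ x) ^ 2

/-- The Dirichlet form of single-site Glauber dynamics for the density `p`. -/
def dirichlet {d : ℕ} {A : Finset (Site d)} (p φ : Conf A → ℝ) : ℝ :=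
  1 / 2 * ∑ σ : Conf A, ∑ σ' : Conf A,
    (if (Finset.univ.filter fun u : ↥A => σ u ≠ σ' u).card = 1 then
      p σ * p σ' / (p σ + p σ') * (φ σ - φ σ') ^ 2 else 0)

/-- The spectral gap of Glauber dynamics for the density `p`. -/
def gap {d : ℕ} {A : Finset (Site d)} (p : Conf A → ℝ) : ℝ :=
  sInf {r : ℝ | ∃ φ : Conf A → ℝ, varOf p φ ≠ 0 ∧ r = dirichlet p φ / varOf p φ}

/-- Conditional probability of spin `b` at `u`, given all other spins of `σ`. -/
def condProb {d : ℕ} {A : Finset (Site d)} (p : Conf A → ℝ) (σ : Conf A) (u : ↥A) (b : Bool) :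
    ℝ :=
  p (Function.update σ u b) / (p (Function.update σ u true) + p (Function.update σ u false))

/-- Generator of continuous-time single-site Glauber dynamics, as a matrix. -/
def generator {d : ℕ} {A : Finset (Site d)} (p : Conf A → ℝ) : Matrix (Conf A) (Conf A) ℝ :=
  Matrix.of fun σ σ' =>
    ∑ u : ↥A,
      ((if σ' = Function.update σ u true then condProb p σ u true else 0)
        + (if σ' = Function.update σ u false then condProb p σ u false else 0)
        - (if σ' = σ then 1 else 0))

/-- The continuous-time Glauber semigroup `P_t = e^{tL}`. -/
def heatSG {d : ℕ} {A : Finset (Site d)} (p : Conf A → ℝ) (t : ℝ) :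
    Matrix (Conf A) (Conf A) ℝ :=
  Matrix.of fun σ σ' => ∑' k : ℕ, t ^ k / (Nat.factorial k : ℝ) * (generator p ^ k) σ σ'

/-- Action of the Glauber semigroup on a test function. -/
def Ptfun {d : ℕ} {A : Finset (Site d)} (p : Conf A → ℝ) (t : ℝ) (φ : Conf A → ℝ) :
    Conf A → ℝ :=
  (heatSG p t).mulVec φ

/-- The (1/4)-total-variation mixing time of continuous-time Glauber dynamics. -/
def mixingTime {d : ℕ} {A : Finset (Site d)} (p : Conf A → ℝ) : ℝ :=
  sInf {t : ℝ | 0 ≤ t ∧ ∀ σ : Conf A, tvDist (fun σ' => heatSG p t σ σ') p ≤ 1 / 4}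

/-- The coordinates of `h` are independent with a common distribution. -/
def IIDField {d : ℕ} {Ω : Type*} [MeasurableSpace Ω] (P : Measure Ω)
    (h : Ω → Site d → ℝ) : Prop :=
  (∀ x, Measurable fun ω => h ω x) ∧
  iIndepFun (fun x ω => h ω x) P ∧
  ∀ x y, IdentDistrib (fun ω => h ω x) (fun ω => h ω y) P P

/-- The coordinates of `h` are i.i.d. with a symmetric distribution. -/
def IIDSymField {d : ℕ} {Ω : Type*} [MeasurableSpace Ω] (P : Measure Ω)
    (h : Ω → Site d → ℝ) : Prop :=
  IIDField P h ∧ ∀ x, IdentDistrib (fun ω => h ω x) (fun ω => -h ω x) P P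

/-- The absolute values of the coordinates of `h` are i.i.d. (signs may be dependent). -/
def IIDAbsField {d : ℕ} {Ω : Type*} [MeasurableSpace Ω] (P : Measure Ω)
    (h : Ω → Site d → ℝ) : Prop :=
  (∀ x, Measurable fun ω => h ω x) ∧
  iIndepFun (fun x ω => |h ω x|) P ∧
  ∀ x y, IdentDistrib (fun ω => |h ω x|) (fun ω => |h ω y|) P P

/-- Weak spatial mixing in expectation, `WSM(C)`, for the RFIM on `Λ`. -/
def WSM {d : ℕ} (β : ℝ) (Λ : Finset (Site d)) {Ω : Type*} [MeasurableSpace Ω]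
    (P : Measure Ω) (h : Ω → Site d → ℝ) (C : ℝ) : Prop :=
  ∀ o ∈ Λ, ∀ r : ℕ, 1 ≤ r →
    (∫ ω, tvAt (gibbs β (h ω) (ball o r ∩ Λ) (bdryIn Λ (ball o r ∩ Λ)) fun _ => true)
               (gibbs β (h ω) (ball o r ∩ Λ) (bdryIn Λ (ball o r ∩ Λ)) fun _ => false) o ∂P)
      ≤ C * Real.exp (-(r : ℝ) / C)

/-- The boundary condition agreeing with `ξ` off `z` and taking value `b` at `z`. -/
def extendBC {d : ℕ} (z : Site d) (ξ : Site d → Bool) (b : Bool) : Site d → Bool :=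
  fun x => if x = z then b else ξ x

/-- Strong spatial mixing in expectation, `SSM(C)`, for the RFIM. -/
def SSM {d : ℕ} (β : ℝ) {Ω : Type*} [MeasurableSpace Ω] (P : Measure Ω)
    (h : Ω → Site d → ℝ) (C : ℝ) : Prop :=
  ∀ r : ℕ, 1 ≤ r → ∀ w : Site d, (∀ i, w i ∈ Finset.Ioo (-(r : ℤ)) (r : ℤ)) →
    ∀ z ∈ bdry (ball w r),
      (∫ ω, (⨆ ξ : Site d → Bool,
        tvAt (gibbs β (h ω) (ball w r) (bdry (ball w r)) (extendBC z ξ true))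
             (gibbs β (h ω) (ball w r) (bdry (ball w r)) (extendBC z ξ false)) fun _ => 0) ∂P)
        ≤ C * Real.exp (-(distInf (fun _ => 0) z : ℝ) / C)

/-- `ρ(β,d,K)`. -/
def rhoK (d : ℕ) (β K : ℝ) : ℝ :=
  Real.exp (2 * d * β - K) / (Real.exp (2 * d * β - K) + Real.exp (-(2 * d * β) + K))

/-- The single-site distribution with external field `η`. -/
def sdist (η : ℝ) (b : Bool) : ℝ := Real.exp (η * spin b) / (Real.exp η + Real.exp (-η))

/-- Energy of the RFIM restricted to the sub-domain `D` of `A` (free boundary on `D`). -/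
def energyOn {d : ℕ} (β : ℝ) (h : Site d → ℝ) (A D : Finset (Site d)) (σ : Conf A) : ℝ :=
  β / 2 * ∑ u : A, ∑ v : A,
      (if u.1 ∈ D ∧ v.1 ∈ D ∧ Adj u.1 v.1 then spin (σ u) * spin (σ v) else 0)
    + ∑ u : A, (if u.1 ∈ D then h u.1 * spin (σ u) else 0)

/-- Unnormalized weight of the RFIM on `D ⊆ A` with free boundary, embedded in `Conf A` by
freezing all spins outside `D` to `+1`. -/
def stageWeight {d : ℕ} (β : ℝ) (h : Site d → ℝ) (A D : Finset (Site d)) (σ : Conf A) : ℝ :=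
  if ∀ u : ↥A, u.1 ∉ D → σ u = true then Real.exp (energyOn β h A D σ) else 0

/-- The RFIM measure on `D ⊆ A` with free boundary, embedded in `Conf A`. -/
def stageMeas {d : ℕ} (β : ℝ) (h : Site d → ℝ) (A D : Finset (Site d)) : Conf A → ℝ :=
  fun σ => stageWeight β h A D σ / ∑ σ' : Conf A, stageWeight β h A D σ'

/-- One step of discrete-time Glauber dynamics for `p`, updating a uniformly chosen
vertex of `D`. -/
def glauberStepOn {d : ℕ} {A : Finset (Site d)} (p : Conf A → ℝ) (D : Finset (Site d)) :
    Matrix (Conf A) (Conf A) ℝ :=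
  Matrix.of fun σ σ' => 1 / (D.card : ℝ) * ∑ u : ↥A,
    (if u.1 ∈ D then
      (if σ' = Function.update σ u true then condProb p σ u true else 0)
      + (if σ' = Function.update σ u false then condProb p σ u false else 0)
     else 0)

/-- One step of discrete-time single-site Glauber dynamics for a density `π` on `V → Bool`:
a uniformly chosen vertex is resampled from the conditional distribution. -/
def glauberStep {V : Type*} [Fintype V] [DecidableEq V] (π : (V → Bool) → ℝ) :
    Matrix (V → Bool) (V → Bool) ℝ :=
  Matrix.of fun σ σ' => 1 / (Fintype.card V : ℝ) * ∑ v : V,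
    ((if σ' = Function.update σ v true then
        π (Function.update σ v true)
          / (π (Function.update σ v true) + π (Function.update σ v false)) else 0)
     + (if σ' = Function.update σ v false then
        π (Function.update σ v false)
          / (π (Function.update σ v true) + π (Function.update σ v false)) else 0))

/-- The domain consisting of the first `i` vertices of the enumeration `v`. -/
def prefDom {d : ℕ} (v : ℕ → Site d) (i : ℕ) : Finset (Site d) := (Finset.range i).image v

/-- Extension of a law `p` by an independent spin at `w` with field `η`. -/
def extendStep {d : ℕ} {A : Finset (Site d)} (w : Site d) (η : ℝ) (p : Conf A → ℝ) :
    Conf A → ℝ :=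
  fun σ => if hw : w ∈ A then p (Function.update σ ⟨w, hw⟩ true) * sdist η (σ ⟨w, hw⟩) else p σ

/-- The law of the iterative sampling algorithm after stage `i+1` (domains grow one vertex
at a time along the enumeration `v`; each stage runs `k` steps of Glauber dynamics on the
current domain; spins outside the current domain are frozen to `+1`). -/
def algLaw {d : ℕ} (n : ℕ) (β : ℝ) (h : Site d → ℝ) (v : ℕ → Site d) (k : ℕ) :
    ℕ → Conf (box d n) → ℝ
  | 0 => fun σ => ∏ u : ↥(box d n),
      (if u.1 = v 0 then sdist (h u.1) (σ u) else if σ u = true then 1 else 0)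
  | (i + 1) =>
      Matrix.vecMul (extendStep (v (i + 1)) (h (v (i + 1))) (algLaw n β h v k i))
        (glauberStepOn (stageMeas β h (box d n) (prefDom v (i + 2))) (prefDom v (i + 2)) ^ k)

/-- The collection `Q_n` of cube-like domains. -/
def Qcoll (d n : ℕ) : Set (Finset (Site d)) :=
  {Λ | Λ ⊆ box d n ∧ ∃ r : ℕ, r ≤ n - 1 ∧ ∃ A : Finset (Site d),
    Λ = ball (fun _ => 0) r ∪ (bdry (ball (fun _ => 0) r) ∩ A)}

/-- Adjacency of open sites in the percolation configuration `w`. -/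
def openAdj {d : ℕ} (w : Site d → Bool) (x y : Site d) : Prop :=
  Adj x y ∧ w x = true ∧ w y = true

/-- The open cluster of `x` in `w` has at least `r` vertices. -/
def clusterAtLeast {d : ℕ} (w : Site d → Bool) (x : Site d) (r : ℕ) : Prop :=
  ∃ S : Finset (Site d), w x = true ∧
    (∀ y ∈ S, Relation.ReflTransGen (openAdj w) x y) ∧ r ≤ S.card

/-- `ω^i = ω^h ∨ η` : the union of the weak-field sites and the Bernoulli noise. -/
def omI {d : ℕ} (K : ℝ) (f : Site d → ℝ) (e : Site d → Bool) : Site d → Bool :=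
  fun x => if |f x| ≤ K then true else e x

/-- `η` is an i.i.d. Bernoulli(ρ) field. -/
def BernoulliField {d : ℕ} {Ω' : Type*} [MeasurableSpace Ω'] (P' : Measure Ω')
    (η : Ω' → Site d → Bool) (ρ : ℝ) : Prop :=
  (∀ x, Measurable fun ω => η ω x) ∧
  iIndepFun (fun x ω => η ω x) P' ∧
  ∀ x, P' {ω | η ω x = true} = ENNReal.ofReal ρ

/-- The coarse-grained lattice `Λ_n^{(R)} = Λ_n ∩ R·ℤ^d`. -/
def coarse (d n R : ℕ) : Finset (Site d) :=
  (box d n).filter fun v => ∀ i, (R : ℤ) ∣ v i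

/-- A coarse-graining vertex `v` is `Good` (anti-concentrated-field version): conditionally
on `ω^h`, clusters of `ω^i = ω^h ∨ η` near `v` have exponential tails. -/
def GoodAnti {d : ℕ} (n R : ℕ) (K : ℝ) {Ω' : Type*} [MeasurableSpace Ω'] (P' : Measure Ω')
    (η : Ω' → Site d → Bool) (f : Site d → ℝ) (v : Site d) : Prop :=
  ∀ w ∈ ball v R ∩ box d n, ∀ r : ℕ,
    Real.log R ^ 2 ≤ (r : ℝ) → (r : ℝ) ≤ (R : ℝ) / 8 →
    P' {ω' | clusterAtLeast (omI K f (η ω')) w r} ≤ ENNReal.ofReal (Real.exp (-(r : ℝ)))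

/-- A coarse-graining vertex `v` is `Good` (SSM version). -/
def GoodSSM {d : ℕ} (n R : ℕ) (Cstar β : ℝ) (f : Site d → ℝ) (v : Site d) : Prop :=
  ∀ w ∈ ball v R ∩ box d n, ∀ ℓ r : ℕ,
    Real.log R ^ 2 ≤ (ℓ : ℝ) → ℓ ≤ 2 * r → (2 * r : ℝ) ≤ (R : ℝ) / 4 →
    ∀ a : Site d, (∀ i, a i ∈ Finset.Ioo (-(r : ℤ)) (r : ℤ)) →
    ∀ z ∈ bdry (ball (w + a) r), distInf w z = ℓ →
      (⨆ ξ : Site d → Bool,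
        tvAt (gibbs β f (ball (w + a) r) (bdry (ball (w + a) r)) (extendBC z ξ true))
             (gibbs β f (ball (w + a) r) (bdry (ball (w + a) r)) (extendBC z ξ false)) w)
        ≤ Real.exp (-(ℓ : ℝ) / Cstar)

/-- One step of the `R-*`-adjacency walk inside `S`. -/
def RstarStep {d : ℕ} (R : ℕ) (S : Finset (Site d)) (x y : Site d) : Prop :=
  x ∈ S ∧ y ∈ S ∧ distInf x y = R

/-- The `R-*`-connected component of `w` inside `S` (empty if `w ∉ S`). -/
def componentOf {d : ℕ} (R : ℕ) (S : Finset (Site d)) (w : Site d) : Finset (Site d) :=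
  S.filter fun x => w ∈ S ∧ Relation.ReflTransGen (RstarStep R S) w x

/-- `B_C`: vertices of `Λ_n` within distance `R` of the component `C0` and at distance at
least `R/2` from the good set. -/
def BCblock {d : ℕ} (n R : ℕ) (GoodS C0 : Finset (Site d)) : Finset (Site d) :=
  (box d n).filter fun x => (∃ y ∈ C0, distInf x y ≤ R) ∧ ∀ g ∈ GoodS, R / 2 ≤ distInf x g

/-- Shifts `a ∈ {-R/8, …, R/8}^d`. -/
def shifts (d R : ℕ) : Finset (Site d) :=
  Fintype.piFinset fun _ => Finset.Icc (-(R / 8 : ℕ) : ℤ) ((R / 8 : ℕ) : ℤ)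

/-- Index set of type-1 blocks: centers within distance `3R/4` of the good set. -/
def type1Idx {d : ℕ} (n R : ℕ) (GoodS : Finset (Site d)) : Finset (Site d) :=
  (box d n).filter fun w => ∃ g ∈ GoodS, distInf w g ≤ 3 * R / 4

/-- The type-1 block centered at `w`. -/
def type1Block {d : ℕ} (n R : ℕ) (w : Site d) : Finset (Site d) :=
  ball w (R / 8) ∩ box d n

/-- Index set of type-2 blocks: a bad component together with a shift. -/
def type2Idx {d : ℕ} (n R : ℕ) (BadS : Finset (Site d)) :
    Finset (Finset (Site d) × Site d) :=
  (BadS.image fun w => componentOf R BadS w) ×ˢ shifts d R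

/-- The type-2 block indexed by a component and a shift. -/
def type2Block {d : ℕ} (n R : ℕ) (GoodS : Finset (Site d)) (c : Finset (Site d) × Site d) :
    Finset (Site d) :=
  ((BCblock n R GoodS c.1).image fun x => x + c.2) ∩ box d n

/-- Membership in the collection of blocks constructed from `GoodS` and `BadS`. -/
def IsBlock {d : ℕ} (n R : ℕ) (GoodS BadS : Finset (Site d)) (B : Finset (Site d)) : Prop :=
  (∃ w ∈ type1Idx n R GoodS, B = type1Block (d := d) n R w) ∨
  (∃ c ∈ type2Idx n R BadS, B = type2Block n R GoodS c)

/-- Heat-bath resampling kernel of the block `B` for the measure `p` on `Conf A`. -/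
def blockKernel {d : ℕ} {A : Finset (Site d)} (p : Conf A → ℝ) (B : Finset (Site d)) :
    Matrix (Conf A) (Conf A) ℝ :=
  Matrix.of fun σ σ' =>
    if ∀ u : ↥A, u.1 ∉ B → σ' u = σ u then
      p σ' / ∑ τ : Conf A, (if ∀ u : ↥A, u.1 ∉ B → τ u = σ u then p τ else 0)
    else 0

/-- Dirichlet form of the continuous-time dynamics driven by the resampling kernel `Kmat`. -/
def kernelDirichlet {d : ℕ} {A : Finset (Site d)} (p : Conf A → ℝ)
    (Kmat : Matrix (Conf A) (Conf A) ℝ) (φ : Conf A → ℝ) : ℝ :=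
  1 / 2 * ∑ σ : Conf A, ∑ σ' : Conf A, p σ * Kmat σ σ' * (φ σ - φ σ') ^ 2

/-- Hamming distance between two configurations. -/
def hamming {d : ℕ} {A : Finset (Site d)} (σ σ' : Conf A) : ℕ :=
  (Finset.univ.filter fun u : ↥A => σ u ≠ σ' u).card

/-- The event (as a finset of configurations) that all spins on `bd` take the value `b`. -/
def pinEvent {d : ℕ} (Λ : Finset (Site d)) (bd : Finset (Site d)) (b : Bool) :
    Finset (Conf Λ) :=
  Finset.univ.filter fun σ => ∀ u : ↥Λ, u.1 ∈ bd → σ u = b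

/-- Conditional probability that the spin at `u` is `+1`, given the event `E`. -/
def condPlusProb {d : ℕ} {Λ : Finset (Site d)} (p : Conf Λ → ℝ) (E : Finset (Conf Λ))
    (u : ↥Λ) : ℝ :=
  (∑ σ ∈ E, (if σ u = true then p σ else 0)) / ∑ σ ∈ E, p σ

/-- `δ_0(v,ℓ)`: influence of the boundary of `B_ℓ(v)` on the spin at `v`. -/
def delta0 {d : ℕ} (β : ℝ) (h : Site d → ℝ) (Λ : Finset (Site d)) (v : Site d) (ℓ : ℕ) : ℝ :=
  tvAt (gibbs β h (ball v ℓ ∩ Λ) (bdryIn Λ (ball v ℓ ∩ Λ)) fun _ => true)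
       (gibbs β h (ball v ℓ ∩ Λ) (bdryIn Λ (ball v ℓ ∩ Λ)) fun _ => false) v

/-- Ising measure on a finite graph `G` with couplings `J` and external field `h`. -/
def isingGraph {V : Type*} [Fintype V] (G : SimpleGraph V) (J : V → V → ℝ) (h : V → ℝ) :
    (V → Bool) → ℝ :=
  fun σ =>
    Real.exp (1 / 2 * ∑ u, ∑ v, (if G.Adj u v then J u v * spin (σ u) * spin (σ v) else 0)
        + ∑ u, h u * spin (σ u))
      / ∑ σ' : V → Bool,
        Real.exp (1 / 2 * ∑ u, ∑ v, (if G.Adj u v then J u v * spin (σ' u) * spin (σ' v) else 0)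
          + ∑ u, h u * spin (σ' u))

/-- Exterior vertex boundary of `A` in the graph `G`. -/
def graphBdry {V : Type*} [Fintype V] (G : SimpleGraph V) (A : Finset V) : Finset V :=
  Finset.univ.filter fun v => v ∉ A ∧ ∃ u ∈ A, G.Adj u v

/-- The event that all spins on `bd` take the value `b`. -/
def pinEventG {V : Type*} [Fintype V] (bd : Finset V) (b : Bool) : Finset (V → Bool) :=
  Finset.univ.filter fun σ => ∀ v ∈ bd, σ v = b

/-- Conditional marginal on `Δ`, given the event `E`. -/
def condMargG {V : Type*} [Fintype V] (p : (V → Bool) → ℝ) (E : Finset (V → Bool))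
    (Δ : Finset V) : (↥Δ → Bool) → ℝ :=
  fun τ => (∑ σ ∈ E, (if ∀ w : ↥Δ, σ w.1 = τ w then p σ else 0)) / ∑ σ ∈ E, p σ

/-- Conditional marginal of the single spin at `v`, given the event `E`. -/
def condMargAtG {V : Type*} [Fintype V] (p : (V → Bool) → ℝ) (E : Finset (V → Bool))
    (v : V) : Bool → ℝ :=
  fun b => (∑ σ ∈ E, (if σ v = b then p σ else 0)) / ∑ σ ∈ E, p σ


/-!
Translating a box, its boundary point and the field by `w` does not change the influence of the
boundary spin, and an i.i.d. field has the same law as its translate; so `SSM(C)` bounds the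
expected influence on `w` of a boundary point at distance `ℓ` by `C e^{-ℓ/C}`, for every site `w`.
By Markov's inequality the influence exceeds `e^{-ℓ/(2C)}` with probability at most
`C e^{-ℓ/(2C)} ≤ C e^{-(log R)²/(2C)}`. A Bad vertex (with `C_* = 2C`) is witnessed by one of at
most `(5R)^{3d+1}` choices of site, radius, box shift and boundary point, and the union bound
`(5R)^{3d+1} C e^{-(log R)²/(2C)} ≤ R^{-5}` holds for large `R`.
-/

section Lattice

variable {d : ℕ}

lemma mem_ball_iff {c x : Site d} {r : ℕ} :
    x ∈ ball c r ↔ ∀ i, c i - r ≤ x i ∧ x i ≤ c i + r := by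
  simp [ball, Fintype.mem_piFinset]

lemma card_ball (c : Site d) (r : ℕ) : (ball c r).card = (2 * r + 1) ^ d := by
  have hIcc (i : Fin d) : (Finset.Icc (c i - r) (c i + r)).card = 2 * r + 1 := by
    rw [Int.card_Icc]
    omega
  simp [ball, Fintype.card_piFinset, hIcc]

lemma mem_image_add_right {A : Finset (Site d)} {x w : Site d} :
    x ∈ A.image (· + w) ↔ x - w ∈ A := by
  simp [← sub_eq_add_neg]

lemma mem_ball_add_right {c x w : Site d} {r : ℕ} :
    x ∈ ball (c + w) r ↔ x - w ∈ ball c r := by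
  simp only [mem_ball_iff, Pi.add_apply, Pi.sub_apply]
  exact forall_congr' fun i => by omega

lemma ball_add (c w : Site d) (r : ℕ) : ball (c + w) r = (ball c r).image (· + w) := by
  ext x
  rw [mem_ball_add_right, mem_image_add_right]

lemma adj_add_right {x y w : Site d} : Adj (x + w) y ↔ Adj x (y - w) := by
  simp only [Adj, Pi.add_apply, Pi.sub_apply, sub_sub_eq_add_sub]

lemma bdry_image_add (A : Finset (Site d)) (w : Site d) :
    bdry (A.image (· + w)) = (bdry A).image (· + w) := by
  ext z
  rw [mem_image_add_right]
  simp only [bdry, Finset.mem_filter, Finset.mem_biUnion, Finset.exists_mem_image]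
  simp only [mem_image_add_right, mem_ball_add_right, adj_add_right]

lemma bdry_ball_subset (c : Site d) (r : ℕ) : bdry (ball c r) ⊆ ball c (r + 1) := by
  intro z hz
  obtain ⟨u, hu, hzu⟩ := Finset.mem_biUnion.mp (Finset.mem_filter.mp hz).1
  rw [mem_ball_iff] at hu hzu ⊢
  intro i
  have := hu i
  have := hzu i
  push_cast
  omega

lemma distInf_sub_right (w z : Site d) : distInf 0 (z - w) = distInf w z := by
  simp only [distInf, Pi.zero_apply, Pi.sub_apply, zero_sub, neg_sub]

end Lattice

section Translation

variable {d : ℕ}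

def siteShift (w : Site d) (A : Finset (Site d)) : ↥A ≃ ↥(A.image (· + w)) :=
  (Equiv.addRight w).subtypeEquiv fun x => by simp

def confShift (w : Site d) (A : Finset (Site d)) : Conf A ≃ Conf (A.image (· + w)) :=
  (siteShift w A).arrowCongr (Equiv.refl Bool)

@[simp]
lemma confShift_apply_siteShift (w : Site d) (A : Finset (Site d)) (σ : Conf A) (u : ↥A) :
    confShift w A σ (siteShift w A u) = σ u := by
  simp [confShift]

@[simp]
lemma siteShift_coe (w : Site d) (A : Finset (Site d)) (u : ↥A) :
    (siteShift w A u : Site d) = u + w := rfl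

lemma energy_image_add (β : ℝ) (η : Site d → ℝ) (A bd : Finset (Site d)) (τ : Site d → Bool)
    (w : Site d) (σ : Conf A) :
    energy β η (A.image (· + w)) (bd.image (· + w)) τ (confShift w A σ)
      = energy β (fun x => η (x + w)) A bd (fun x => τ (x + w)) σ := by
  simp_rw [energy, ← (siteShift w A).sum_comp,
    Finset.sum_image fun x _ y _ => add_right_cancel (b := w) (a := x) (c := y)]
  simp [adj_add_right]

lemma gibbs_image_add (β : ℝ) (η : Site d → ℝ) (A bd : Finset (Site d)) (τ : Site d → Bool)
    (w : Site d) (σ : Conf A) :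
    gibbs β η (A.image (· + w)) (bd.image (· + w)) τ (confShift w A σ)
      = gibbs β (fun x => η (x + w)) A bd (fun x => τ (x + w)) σ := by
  simp only [gibbs, energy_image_add, ← (confShift w A).sum_comp]

lemma probPlusAt_gibbs_image_add (β : ℝ) (η : Site d → ℝ) (A bd : Finset (Site d))
    (τ : Site d → Bool) (w o : Site d) :
    probPlusAt (gibbs β η (A.image (· + w)) (bd.image (· + w)) τ) (o + w)
      = probPlusAt (gibbs β (fun x => η (x + w)) A bd (fun x => τ (x + w))) o := by
  by_cases ho : o ∈ A
  · have ho' : o + w ∈ A.image (· + w) := Finset.mem_image_of_mem _ ho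
    rw [probPlusAt, probPlusAt, dif_pos ho', dif_pos ho, ← (confShift w A).sum_comp]
    have hsite : (⟨o + w, ho'⟩ : ↥(A.image (· + w))) = siteShift w A ⟨o, ho⟩ := rfl
    simp_rw [gibbs_image_add, hsite, confShift_apply_siteShift]
  · have ho' : o + w ∉ A.image (· + w) := by simpa [mem_image_add_right] using ho
    rw [probPlusAt, probPlusAt, dif_neg ho', dif_neg ho]

lemma extendBC_add_right (z w : Site d) (ξ : Site d → Bool) (b : Bool) :
    (fun x => extendBC (z + w) ξ b (x + w)) = extendBC z (fun x => ξ (x + w)) b := by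
  ext x
  simp [extendBC]

def influence (β : ℝ) (η : Site d → ℝ) (c : Site d) (r : ℕ) (z o : Site d) (ξ : Site d → Bool) :
    ℝ :=
  tvAt (gibbs β η (ball c r) (bdry (ball c r)) (extendBC z ξ true))
    (gibbs β η (ball c r) (bdry (ball c r)) (extendBC z ξ false)) o

def maxInfluence (β : ℝ) (η : Site d → ℝ) (c : Site d) (r : ℕ) (z o : Site d) : ℝ :=
  ⨆ ξ, influence β η c r z o ξ

lemma influence_add_right (β : ℝ) (η : Site d → ℝ) (c : Site d) (r : ℕ) (z o w : Site d)
    (ξ : Site d → Bool) :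
    influence β η (c + w) r (z + w) (o + w) ξ
      = influence β (fun x => η (x + w)) c r z o fun x => ξ (x + w) := by
  rw [influence, influence, ball_add, bdry_image_add]
  simp only [tvAt, probPlusAt_gibbs_image_add, extendBC_add_right]

lemma maxInfluence_add_right (β : ℝ) (η : Site d → ℝ) (c : Site d) (r : ℕ) (z o w : Site d) :
    maxInfluence β η (c + w) r (z + w) (o + w)
      = maxInfluence β (fun x => η (x + w)) c r z o := by
  have hshift : Function.Surjective fun (ξ : Site d → Bool) x => ξ (x + w) :=
    fun ξ => ⟨fun x => ξ (x - w), by simp⟩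
  simp only [maxInfluence, influence_add_right]
  exact hshift.iSup_comp _

end Translation

section GibbsBounds

variable {d : ℕ}

lemma probPlusAt_nonneg {A : Finset (Site d)} {p : Conf A → ℝ} (hp : 0 ≤ p) (o : Site d) :
    0 ≤ probPlusAt p o := by
  unfold probPlusAt
  split_ifs
  exacts [Finset.sum_nonneg fun σ _ => ite_nonneg (hp σ) le_rfl, le_rfl]

lemma probPlusAt_le_one {A : Finset (Site d)} {p : Conf A → ℝ} (hp : 0 ≤ p)
    (hp_sum : ∑ σ, p σ = 1) (o : Site d) : probPlusAt p o ≤ 1 := by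
  unfold probPlusAt
  split_ifs
  · exact hp_sum ▸ Finset.sum_le_sum fun σ _ => by split_ifs; exacts [le_rfl, hp σ]
  · exact zero_le_one

lemma gibbs_nonneg (β : ℝ) (η : Site d → ℝ) (A bd : Finset (Site d)) (τ : Site d → Bool) :
    0 ≤ gibbs β η A bd τ :=
  fun _ => by unfold gibbs; positivity

lemma sum_gibbs (β : ℝ) (η : Site d → ℝ) (A bd : Finset (Site d)) (τ : Site d → Bool) :
    ∑ σ, gibbs β η A bd τ σ = 1 := by
  unfold gibbs
  rw [← Finset.sum_div, div_self (by positivity)]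

lemma tvAt_gibbs_le_one (β : ℝ) (η : Site d → ℝ) (A bd : Finset (Site d))
    (τ₁ τ₂ : Site d → Bool) (o : Site d) :
    tvAt (gibbs β η A bd τ₁) (gibbs β η A bd τ₂) o ≤ 1 := by
  have := probPlusAt_nonneg (gibbs_nonneg β η A bd τ₁) o
  have := probPlusAt_nonneg (gibbs_nonneg β η A bd τ₂) o
  have := probPlusAt_le_one (gibbs_nonneg β η A bd τ₁) (sum_gibbs β η A bd τ₁) o
  have := probPlusAt_le_one (gibbs_nonneg β η A bd τ₂) (sum_gibbs β η A bd τ₂) o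
  rw [tvAt, abs_sub_le_iff]
  constructor <;> linarith

lemma influence_le_one (β : ℝ) (η : Site d → ℝ) (c : Site d) (r : ℕ) (z o : Site d)
    (ξ : Site d → Bool) : influence β η c r z o ξ ≤ 1 :=
  tvAt_gibbs_le_one β η _ _ _ _ o

lemma maxInfluence_nonneg (β : ℝ) (η : Site d → ℝ) (c : Site d) (r : ℕ) (z o : Site d) :
    0 ≤ maxInfluence β η c r z o :=
  Real.iSup_nonneg fun _ => abs_nonneg _

lemma maxInfluence_le_one (β : ℝ) (η : Site d → ℝ) (c : Site d) (r : ℕ) (z o : Site d) :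
    maxInfluence β η c r z o ≤ 1 :=
  ciSup_le fun ξ => influence_le_one β η c r z o ξ

lemma continuous_probPlusAt_gibbs (β : ℝ) (A bd : Finset (Site d)) (τ : Site d → Bool)
    (o : Site d) : Continuous fun η : Site d → ℝ => probPlusAt (gibbs β η A bd τ) o := by
  have henergy (σ : Conf A) : Continuous fun η : Site d → ℝ => energy β η A bd τ σ := by
    unfold energy
    fun_prop
  have hgibbs (σ : Conf A) : Continuous fun η : Site d → ℝ => gibbs β η A bd τ σ := by
    unfold gibbs
    exact (henergy σ).rexp.div (continuous_finsetSum _ fun σ' _ => (henergy σ').rexp)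
      fun η => by positivity
  unfold probPlusAt
  split_ifs
  · exact continuous_finsetSum _ fun σ _ => by split_ifs <;> fun_prop
  · exact continuous_const

lemma measurable_maxInfluence (β : ℝ) (c : Site d) (r : ℕ) (z o : Site d) :
    Measurable fun η : Site d → ℝ => maxInfluence β η c r z o := by
  refine (lowerSemicontinuous_ciSup (fun η => ⟨1, ?_⟩) fun ξ => ?_).measurable
  · rintro _ ⟨ξ, rfl⟩
    exact influence_le_one β η c r z o ξ
  · exact ((continuous_probPlusAt_gibbs β _ _ _ o).sub
      (continuous_probPlusAt_gibbs β _ _ _ o)).abs.lowerSemicontinuous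

end GibbsBounds

section Probability

variable {d : ℕ} {Ω : Type*} [MeasurableSpace Ω] {P : Measure Ω}

lemma measure_lt_le_ofReal_integral_div [IsFiniteMeasure P] {f : Ω → ℝ} (hf0 : 0 ≤ᵐ[P] f)
    (hfi : Integrable f P) {ε c : ℝ} (hε : 0 < ε) (hint : ∫ ω, f ω ∂P ≤ c) :
    P {ω | ε < f ω} ≤ ENNReal.ofReal (c / ε) := by
  have hmarkov := mul_meas_ge_le_integral_of_nonneg hf0 hfi ε
  calc P {ω | ε < f ω} ≤ P {ω | ε ≤ f ω} := measure_mono fun ω (hω : ε < f ω) => hω.le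
    _ = ENNReal.ofReal (P.real {ω | ε ≤ f ω}) := (ofReal_measureReal (measure_ne_top _ _)).symm
    _ ≤ ENNReal.ofReal (c / ε) :=
      ENNReal.ofReal_le_ofReal (by rw [le_div_iff₀ hε]; linarith)

lemma IIDField.identDistrib_translate {h : Ω → Site d → ℝ} (hh : IIDField P h) (w : Site d) :
    IdentDistrib (fun ω x => h ω (x + w)) h P P :=
  IdentDistrib.pi (fun x => hh.2.2 (x + w) x) (hh.2.1.precomp (add_left_injective w)) hh.2.1

variable {h : Ω → Site d → ℝ} {β C : ℝ} {r : ℕ} {a b : Site d}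

lemma measurable_maxInfluence_field (hh : IIDField P h) (c : Site d) (z o : Site d) :
    Measurable fun ω => maxInfluence β (h ω) c r z o :=
  (measurable_maxInfluence β c r z o).comp (measurable_pi_lambda _ hh.1)

lemma integral_maxInfluence_le (hh : IIDField P h) (hssm : SSM β P h C) (hr : 1 ≤ r)
    (ha : ∀ i, a i ∈ Finset.Ioo (-(r : ℤ)) r) (hb : b ∈ bdry (ball a r)) (w : Site d) :
    ∫ ω, maxInfluence β (h ω) (a + w) r (b + w) w ∂P ≤ C * Real.exp (-(distInf 0 b) / C) := by
  have htranslate :=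
    ((hh.identDistrib_translate w).comp (measurable_maxInfluence β a r b 0)).integral_eq
  calc ∫ ω, maxInfluence β (h ω) (a + w) r (b + w) w ∂P
      = ∫ ω, maxInfluence β (fun x => h ω (x + w)) a r b 0 ∂P := by
        simp_rw [← maxInfluence_add_right, zero_add]
    _ = ∫ ω, maxInfluence β (h ω) a r b 0 ∂P := htranslate
    _ ≤ C * Real.exp (-(distInf 0 b) / C) := hssm r hr a ha b hb

lemma measure_exp_lt_maxInfluence_le [IsProbabilityMeasure P] (hh : IIDField P h)
    (hssm : SSM β P h C) (hC : 0 < C) (hr : 1 ≤ r) (ha : ∀ i, a i ∈ Finset.Ioo (-(r : ℤ)) r)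
    (hb : b ∈ bdry (ball a r)) (w : Site d) :
    P {ω | Real.exp (-(distInf 0 b) / (2 * C)) < maxInfluence β (h ω) (a + w) r (b + w) w}
      ≤ ENNReal.ofReal (C * Real.exp (-(distInf 0 b) / (2 * C))) := by
  set ℓ : ℝ := (distInf 0 b : ℝ)
  have hmeas := measurable_maxInfluence_field (β := β) (r := r) hh (a + w) (b + w) w
  have hint : Integrable (fun ω => maxInfluence β (h ω) (a + w) r (b + w) w) P :=
    .of_bound hmeas.aestronglyMeasurable 1 (ae_of_all _ fun ω => by
      rw [Real.norm_of_nonneg (maxInfluence_nonneg ..)]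
      exact maxInfluence_le_one ..)
  have hsplit : Real.exp (-ℓ / C) = Real.exp (-ℓ / (2 * C)) * Real.exp (-ℓ / (2 * C)) := by
    rw [← Real.exp_add]
    congr 1
    field_simp
    ring
  convert measure_lt_le_ofReal_integral_div (ae_of_all _ fun ω => maxInfluence_nonneg ..) hint
    (Real.exp_pos _) (integral_maxInfluence_le hh hssm hr ha hb w) using 2
  rw [hsplit, ← mul_assoc, mul_div_cancel_right₀ _ (Real.exp_pos _).ne']

end Probability

section Covering

variable {d : ℕ}

/-- `(w, r, a, b)` encodes the site `w`, the box `ball (a + w) r` and its boundary point `b + w`. -/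
def badIndex (R : ℕ) (v : Site d) : Finset (Site d × ℕ × Site d × Site d) :=
  (ball v R ×ˢ Finset.range (R + 1) ×ˢ ball 0 R ×ˢ ball 0 (2 * R + 2)).filter fun (_, r, a, b) =>
    1 ≤ r ∧ (∀ i, a i ∈ Finset.Ioo (-(r : ℤ)) r) ∧ b ∈ bdry (ball a r) ∧
      Real.log R ^ 2 ≤ distInf 0 b

lemma card_badIndex_le {R : ℕ} (hR : 5 ≤ R) (v : Site d) :
    (badIndex R v).card ≤ (5 * R) ^ (3 * d + 1) := by
  calc (badIndex R v).card
      ≤ (2 * R + 1) ^ d * ((R + 1) * ((2 * R + 1) ^ d * (2 * (2 * R + 2) + 1) ^ d)) := by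
        refine (Finset.card_filter_le _ _).trans_eq ?_
        simp only [Finset.card_product, Finset.card_range, card_ball]
    _ ≤ (5 * R) ^ d * (5 * R * ((5 * R) ^ d * (5 * R) ^ d)) := by
        gcongr <;> omega
    _ = (5 * R) ^ (3 * d + 1) := by ring

lemma exists_mem_badIndex_of_not_goodSSM {n R : ℕ} {Cstar β : ℝ} {f : Site d → ℝ} {v : Site d}
    (hR : 1 ≤ Real.log R) (hbad : ¬ GoodSSM n R Cstar β f v) :
    ∃ w r a b, (w, r, a, b) ∈ badIndex R v ∧
      Real.exp (-(distInf 0 b : ℝ) / Cstar) < maxInfluence β f (a + w) r (b + w) w := by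
  simp only [GoodSSM, not_forall, not_le, exists_prop] at hbad
  obtain ⟨w, hw, ℓ, r, hℓ, hℓr, hrR, a, ha, z, hz, rfl, hlt⟩ := hbad
  have hzw : z - w ∈ bdry (ball a r) := by
    rwa [add_comm, ball_add, bdry_image_add, mem_image_add_right] at hz
  have hrR' : r ≤ R := by
    have : (r : ℝ) ≤ R := by linarith [(Nat.cast_nonneg R : (0 : ℝ) ≤ R)]
    exact_mod_cast this
  have hr : 1 ≤ r := by
    have : (1 : ℝ) ≤ distInf w z := by nlinarith
    have : 1 ≤ distInf w z := by exact_mod_cast this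
    omega
  refine ⟨w, r, a, z - w, Finset.mem_filter.mpr ⟨?_, hr, ha, hzw, ?_⟩, ?_⟩
  · have hzw' := bdry_ball_subset a r hzw
    refine Finset.mem_product.mpr ⟨(Finset.mem_inter.mp hw).1, ?_⟩
    simp only [Finset.mem_product, Finset.mem_range, mem_ball_iff, Pi.zero_apply,
      Finset.mem_Ioo] at ha hzw' ⊢
    refine ⟨by omega, fun i => ?_, fun i => ?_⟩ <;>
      have := ha i <;> have := hzw' i <;> omega
  · rwa [distInf_sub_right]
  · rwa [distInf_sub_right, sub_add_cancel, add_comm]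

end Covering

section UnionBound

open Filter

variable {d : ℕ} {Ω : Type*} [MeasurableSpace Ω] {P : Measure Ω} {h : Ω → Site d → ℝ} {β C : ℝ}

lemma measure_not_goodSSM_le [IsProbabilityMeasure P] (hh : IIDField P h) (hssm : SSM β P h C)
    (hC : 0 < C) {n R : ℕ} (hR : 1 ≤ Real.log R) (v : Site d) :
    P {ω | ¬ GoodSSM n R (2 * C) β (h ω) v}
      ≤ (badIndex R v).card * ENNReal.ofReal (C * Real.exp (-Real.log R ^ 2 / (2 * C))) := by
  let E : Site d × ℕ × Site d × Site d → Set Ω := fun (w, r, a, b) =>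
    {ω | Real.exp (-(distInf 0 b : ℝ) / (2 * C)) < maxInfluence β (h ω) (a + w) r (b + w) w}
  have hcover : {ω | ¬ GoodSSM n R (2 * C) β (h ω) v} ⊆ ⋃ p ∈ badIndex R v, E p := by
    intro ω hω
    obtain ⟨w, r, a, b, hp, hlt⟩ := exists_mem_badIndex_of_not_goodSSM hR hω
    exact Set.mem_biUnion hp hlt
  have hE : ∀ p ∈ badIndex R v,
      P (E p) ≤ ENNReal.ofReal (C * Real.exp (-Real.log R ^ 2 / (2 * C))) := by
    rintro ⟨w, r, a, b⟩ hp
    obtain ⟨-, hr, ha, hb, hℓ⟩ := Finset.mem_filter.mp hp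
    refine (measure_exp_lt_maxInfluence_le hh hssm hC hr ha hb w).trans
      (ENNReal.ofReal_le_ofReal ?_)
    gcongr
  calc P {ω | ¬ GoodSSM n R (2 * C) β (h ω) v}
      ≤ ∑ p ∈ badIndex R v, P (E p) := (measure_mono hcover).trans (measure_biUnion_finset_le _ _)
    _ ≤ (badIndex R v).card • ENNReal.ofReal (C * Real.exp (-Real.log R ^ 2 / (2 * C))) :=
      Finset.sum_le_card_nsmul _ _ _ hE
    _ = _ := nsmul_eq_mul _ _

lemma eventually_mul_pow_mul_exp_neg_log_sq_le_one {K C : ℝ} (hK : 0 < K) (hC : 0 < C) (k : ℕ) :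
    ∀ᶠ x : ℝ in atTop, K * x ^ k * Real.exp (-Real.log x ^ 2 / C) ≤ 1 := by
  have hquad : Tendsto (fun t : ℝ => t * (t / C - k)) atTop atTop :=
    tendsto_id.atTop_mul_atTop₀ (tendsto_atTop_add_const_right _ _ (tendsto_id.atTop_div_const hC))
  filter_upwards [(hquad.comp Real.tendsto_log_atTop).eventually_ge_atTop (Real.log K),
    eventually_gt_atTop 0] with x hx hx0
  have hexpand : Real.log x * (Real.log x / C - k) = Real.log x ^ 2 / C - k * Real.log x := by
    ring
  rw [← Real.exp_log hK, ← Real.exp_log (pow_pos hx0 k), Real.log_pow, ← Real.exp_add,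
    ← Real.exp_add, Real.exp_le_one_iff]
  simp only [Function.comp_apply] at hx
  linarith [neg_div C (Real.log x ^ 2)]

lemma eventually_card_mul_tail_le (d : ℕ) (hC : 0 < C) :
    ∀ᶠ R : ℕ in atTop, 5 ≤ R ∧ 1 ≤ Real.log R ∧
      (((5 * R) ^ (3 * d + 1) : ℕ) : ℝ) * (C * Real.exp (-Real.log R ^ 2 / (2 * C)))
        ≤ 1 / (R : ℝ) ^ 5 := by
  filter_upwards [eventually_ge_atTop 5,
    tendsto_natCast_atTop_atTop.eventually (Real.tendsto_log_atTop.eventually_ge_atTop 1),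
    tendsto_natCast_atTop_atTop.eventually (eventually_mul_pow_mul_exp_neg_log_sq_le_one
      (K := 5 ^ (3 * d + 1) * C) (by positivity) (by positivity : 0 < 2 * C) (3 * d + 6))]
    with R h5 hlog htail
  refine ⟨h5, hlog, ?_⟩
  rw [le_div_iff₀ (by positivity)]
  refine le_of_eq_of_le ?_ htail
  push_cast
  ring

end UnionBound

theorem prob_bad_block_ssm_general
    (d : ℕ) (β : ℝ) (C : ℝ) (hC : 0 < C) :
    ∃ Cstar : ℝ, 0 < Cstar ∧ ∃ R₀ : ℕ, ∀ R : ℕ, R₀ ≤ R → ∀ n : ℕ,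
      ∀ (Ω : Type) (_ : MeasurableSpace Ω) (P : Measure Ω) (_ : IsProbabilityMeasure P)
        (h : Ω → Site d → ℝ), IIDField P h → SSM β P h C →
      ∀ v ∈ coarse d n R,
        P {ω | ¬ GoodSSM n R Cstar β (h ω) v} ≤ ENNReal.ofReal (1 / (R : ℝ) ^ 5) := by
  obtain ⟨R₀, hR₀⟩ := Filter.eventually_atTop.mp (eventually_card_mul_tail_le d hC)
  refine ⟨2 * C, by positivity, R₀, fun R hR n Ω _ P _ h hh hssm v _ => ?_⟩
  obtain ⟨hR5, hlog, htail⟩ := hR₀ R hR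
  calc P {ω | ¬ GoodSSM n R (2 * C) β (h ω) v}
      ≤ (badIndex R v).card * ENNReal.ofReal (C * Real.exp (-Real.log R ^ 2 / (2 * C))) :=
        measure_not_goodSSM_le hh hssm hC hlog v
    _ ≤ (((5 * R) ^ (3 * d + 1) : ℕ) : ENNReal)
          * ENNReal.ofReal (C * Real.exp (-Real.log R ^ 2 / (2 * C))) := by
        gcongr
        exact card_badIndex_le hR5 v
    _ = ENNReal.ofReal ((((5 * R) ^ (3 * d + 1) : ℕ) : ℝ)
          * (C * Real.exp (-Real.log R ^ 2 / (2 * C)))) := by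
        rw [ENNReal.ofReal_mul (Nat.cast_nonneg _), ENNReal.ofReal_natCast]
    _ ≤ ENNReal.ofReal (1 / (R : ℝ) ^ 5) := ENNReal.ofReal_le_ofReal htail

/-- under `SSM(C)` with i.i.d. fields, each coarse-graining vertex is `Bad`
(in the SSM sense, with constant `C_*(d,C)`) with probability at most `R^{-5}`, for all
`R ≥ R₀(d,C)`. -/
theorem prob_bad_block_ssm
    (d : ℕ) (hd : 2 ≤ d) (β : ℝ) (hβ : 0 < β) (C : ℝ) (hC : 0 < C) :
    ∃ Cstar : ℝ, 0 < Cstar ∧ ∃ R₀ : ℕ, ∀ R : ℕ, R₀ ≤ R → ∀ n : ℕ,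
      ∀ (Ω : Type) (_ : MeasurableSpace Ω) (P : Measure Ω) (_ : IsProbabilityMeasure P)
        (h : Ω → Site d → ℝ), IIDField P h → SSM β P h C →
      ∀ v ∈ coarse d n R,
        P {ω | ¬ GoodSSM n R Cstar β (h ω) v} ≤ ENNReal.ofReal (1 / (R : ℝ) ^ 5) :=
  prob_bad_block_ssm_general d β C hC

end RFIM
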